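/- arXiv:2110.02665 — 2 statements merged into one kernel-verified Lean document; each statement's English description precedes it below -/
import Mathlib

section
/- For a real Hamiltonian matrix H (i.e., (JH)ᵀ = JH) and a shift σ that is purely real or purely imaginary with ±σ not eigenvalues of H, the matrix R_σ⁻¹ = (H + σI)⁻¹(H - σI)⁻¹ is real-valued and skew-Hamiltonian, i.e., (J R_σ⁻¹)ᵀ = -J R_σ⁻¹. -/
open Matrix

noncomputable def Jre (n : ℕ) : Matrix (Fin n ⊕ Fin n) (Fin n ⊕ Fin n) ℝ :=
  Matrix.fromBlocks 0 1 (-1) 0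

noncomputable def JC (n : ℕ) : Matrix (Fin n ⊕ Fin n) (Fin n ⊕ Fin n) ℂ :=
  (Jre n).map ((↑) : ℝ → ℂ)

section helpers
variable {m : Type*} [Fintype m] [DecidableEq m]

lemma mapC_eq (B : Matrix m m ℝ) : B.map ((↑) : ℝ → ℂ) = Complex.ofRealHom.mapMatrix B := rfl

lemma mapC_mul (B C : Matrix m m ℝ) :
    (B * C).map ((↑) : ℝ → ℂ) = B.map (↑) * C.map (↑) := by
  simp [mapC_eq, _root_.map_mul]

lemma mapC_det (B : Matrix m m ℝ) : (B.map ((↑) : ℝ → ℂ)).det = (B.det : ℂ) := by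
  rw [mapC_eq, ← RingHom.map_det]; rfl

lemma mapC_one : ((1 : Matrix m m ℝ).map ((↑) : ℝ → ℂ)) = 1 := by
  simp [mapC_eq, _root_.map_one]

lemma mapC_smul (r : ℝ) (B : Matrix m m ℝ) :
    ((r • B).map ((↑) : ℝ → ℂ)) = (r : ℂ) • B.map (↑) := by
  ext i j; simp

lemma mapC_sub (B C : Matrix m m ℝ) :
    ((B - C).map ((↑) : ℝ → ℂ)) = B.map (↑) - C.map (↑) := by
  ext i j; simp

end helpers

theorem stmt1 {n : ℕ} (H : Matrix (Fin n ⊕ Fin n) (Fin n ⊕ Fin n) ℝ)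
    (hHam : (Jre n * H)ᵀ = Jre n * H)
    (σ : ℂ) (hσ : σ.im = 0 ∨ σ.re = 0)
    (Hc : Matrix (Fin n ⊕ Fin n) (Fin n ⊕ Fin n) ℂ)
    (hHc : Hc = H.map ((↑) : ℝ → ℂ))
    (h1 : IsUnit (Hc - σ • (1 : Matrix (Fin n ⊕ Fin n) (Fin n ⊕ Fin n) ℂ)))
    (h2 : IsUnit (Hc + σ • (1 : Matrix (Fin n ⊕ Fin n) (Fin n ⊕ Fin n) ℂ))) :
    (∀ i j, (((Hc + σ • 1)⁻¹ * (Hc - σ • 1)⁻¹) i j).im = 0) ∧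
    (JC n * ((Hc + σ • 1)⁻¹ * (Hc - σ • 1)⁻¹))ᵀ
      = -(JC n * ((Hc + σ • 1)⁻¹ * (Hc - σ • 1)⁻¹)) := by
  -- σ * σ is real
  have him : (σ * σ).im = 0 := by
    rcases hσ with h | h <;> simp [Complex.mul_im, h]
  set r : ℝ := (σ * σ).re with hr
  have hσσ : σ * σ = (r : ℂ) := by
    apply Complex.ext
    · simp [hr]
    · simp [him]
  set A : Matrix (Fin n ⊕ Fin n) (Fin n ⊕ Fin n) ℝ := H * H - r • 1 with hA
  have hmapA : A.map ((↑) : ℝ → ℂ) = (Hc - σ • 1) * (Hc + σ • 1) := by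
    have expand : (Hc - σ • 1) * (Hc + σ • 1) = Hc * Hc - (σ * σ) • 1 := by
      simp only [sub_mul, mul_add, smul_mul_assoc, mul_smul_comm, Matrix.one_mul,
        Matrix.mul_one, smul_smul]
      module
    rw [expand, hHc, hσσ, hA, mapC_sub, mapC_mul, mapC_smul, mapC_one]
  set M : Matrix (Fin n ⊕ Fin n) (Fin n ⊕ Fin n) ℂ := (Hc - σ • 1) * (Hc + σ • 1) with hM
  have hMunit : IsUnit M := h1.mul h2
  have hMdet : IsUnit M.det := (Matrix.isUnit_iff_isUnit_det M).mp hMunit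
  have hAdetC : M.det = ((A.det : ℝ) : ℂ) := by rw [← hmapA, mapC_det]
  have hAdet : IsUnit A.det := by
    rw [isUnit_iff_ne_zero]
    intro h0
    rw [hAdetC, h0] at hMdet
    simp at hMdet
  have hinv : M⁻¹ = (A⁻¹).map ((↑) : ℝ → ℂ) := by
    apply Matrix.inv_eq_right_inv
    rw [← hmapA, ← mapC_mul, Matrix.mul_nonsing_inv _ hAdet, mapC_one]
  have hS : (Hc + σ • 1)⁻¹ * (Hc - σ • 1)⁻¹ = M⁻¹ := by
    rw [hM, Matrix.mul_inv_rev]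
  constructor
  · intro i j
    rw [hS, hinv]
    simp [Matrix.map_apply]
  · have hJt : (Jre n)ᵀ = -(Jre n) := by
      ext i j
      rcases i with i | i <;> rcases j with j | j <;>
        simp [Jre, Matrix.fromBlocks, Matrix.one_apply, eq_comm]
    have hHJ : Hᵀ * Jre n = -(Jre n * H) := by
      have h := hHam
      rw [Matrix.transpose_mul, hJt] at h
      calc Hᵀ * Jre n = -(Hᵀ * -(Jre n)) := by simp
        _ = -(Jre n * H) := by rw [h]
    have hAJ : Aᵀ * Jre n = Jre n * A := by
      rw [hA]
      simp only [Matrix.transpose_sub, Matrix.transpose_mul, Matrix.transpose_smul,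
        Matrix.transpose_one, Matrix.sub_mul, Matrix.mul_sub, Matrix.smul_mul,
        Matrix.mul_smul, Matrix.one_mul, Matrix.mul_one]
      congr 1
      rw [Matrix.mul_assoc, hHJ, Matrix.mul_neg, ← Matrix.mul_assoc, hHJ]
      simp [Matrix.mul_assoc]
    have hMJ : Mᵀ * JC n = JC n * M := by
      have h := congrArg (fun X => X.map ((↑) : ℝ → ℂ)) hAJ
      simp only [mapC_mul] at h
      rw [← hmapA, ← Matrix.transpose_map]
      exact h
    have hMTdet : IsUnit Mᵀ.det := by rwa [Matrix.det_transpose]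
    have hSJ : (M⁻¹)ᵀ * JC n = JC n * M⁻¹ := by
      rw [Matrix.transpose_nonsing_inv]
      calc (Mᵀ)⁻¹ * JC n = (Mᵀ)⁻¹ * (JC n * M * M⁻¹) := by
            rw [Matrix.mul_assoc (JC n), Matrix.mul_nonsing_inv _ hMdet, Matrix.mul_one]
        _ = (Mᵀ)⁻¹ * (Mᵀ * JC n * M⁻¹) := by rw [hMJ]
        _ = JC n * M⁻¹ := by
            rw [Matrix.mul_assoc Mᵀ, ← Matrix.mul_assoc _ Mᵀ,
              Matrix.nonsing_inv_mul _ hMTdet, Matrix.one_mul]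
    have hJCt : (JC n)ᵀ = -(JC n) := by
      rw [JC, ← Matrix.transpose_map, hJt]
      ext i j; simp [Matrix.map_apply]
    rw [hS, Matrix.transpose_mul, hJCt, Matrix.mul_neg, hSJ]
end

section
/- If H is a real Hamiltonian matrix with simple eigenvalue λ ≠ 0 and right eigenvector v₊, and v₋ is a right eigenvector for the eigenvalue -λ of H, then v₋ᵀJv₊ ≠ 0. -/
open Matrix

section aux

open Polynomial Module

lemma aux_eval_charpoly {m : Type*} [Fintype m] [DecidableEq m] (A : Matrix m m ℂ) (x : ℂ) :
    (Matrix.charpoly A).eval x = (x • (1 : Matrix m m ℂ) - A).det := by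
  rw [Matrix.charpoly, ← Polynomial.coe_evalRingHom, RingHom.map_det]
  congr 1
  ext i j
  by_cases h : i = j
  · subst h
    simp [Matrix.charmatrix_apply_eq, Matrix.one_apply, Matrix.smul_apply, Matrix.sub_apply]
  · simp [Matrix.charmatrix_apply_ne _ _ _ h, Matrix.one_apply_ne h, Matrix.sub_apply,
      Matrix.smul_apply, h]

lemma aux_Jre_transpose (n : ℕ) : (Jre n)ᵀ = -(Jre n) := by
  simp [Jre, Matrix.fromBlocks_transpose, Matrix.fromBlocks_neg]

lemma aux_Jre_mul_Jre (n : ℕ) : Jre n * Jre n = -1 := by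
  simp [Jre, Matrix.fromBlocks_multiply, ← Matrix.fromBlocks_one, Matrix.fromBlocks_neg]

lemma aux_JC_eq (n : ℕ) : JC n = (Complex.ofRealHom : ℝ →+* ℂ).mapMatrix (Jre n) := rfl

lemma aux_JC_mul_JC (n : ℕ) : JC n * JC n = -1 := by
  rw [aux_JC_eq, ← _root_.map_mul, aux_Jre_mul_Jre, _root_.map_neg, _root_.map_one]

lemma aux_JC_transpose (n : ℕ) : (JC n)ᵀ = -(JC n) := by
  rw [aux_JC_eq]
  have : ((Complex.ofRealHom : ℝ →+* ℂ).mapMatrix (Jre n))ᵀ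
      = (Complex.ofRealHom : ℝ →+* ℂ).mapMatrix ((Jre n)ᵀ) := by
    simp [RingHom.mapMatrix_apply, Matrix.transpose_map]
  rw [this, aux_Jre_transpose, _root_.map_neg]

lemma aux_natTrailingDegree {m : Type*} [Fintype m] [DecidableEq m] (p : Polynomial ℂ) (lam : ℂ)
    (hp0 : p ≠ 0) (hsimple : p.rootMultiplicity lam = 1) (A : Matrix m m ℂ)
    (hA : ∀ x : ℂ, (Matrix.charpoly A).eval x = p.eval (x + lam)) :
    (Matrix.charpoly A).natTrailingDegree = 1 := by
  set r := p /ₘ (X - C lam) ^ (p.rootMultiplicity lam) with hr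
  have hfac : (X - C lam) ^ (p.rootMultiplicity lam) * r = p :=
    pow_mul_divByMonic_rootMultiplicity_eq p lam
  rw [hsimple, pow_one] at hfac
  have hrl : r.eval lam ≠ 0 := eval_divByMonic_pow_rootMultiplicity_ne_zero lam hp0
  set s := r.comp (X + C lam) with hs
  have hs0 : s.eval 0 = r.eval lam := by simp [hs, eval_comp]
  have hsne : s ≠ 0 := fun h => hrl (by rw [← hs0, h, eval_zero])
  have hq : Matrix.charpoly A = X * s := by
    apply Polynomial.funext
    intro x
    rw [hA, ← hfac]
    simp [hs, eval_comp]
  have hcs : Polynomial.constantCoeff s ≠ 0 := by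
    rw [constantCoeff_apply, coeff_zero_eq_eval_zero, hs0]; exact hrl
  rw [hq, natTrailingDegree_mul X_ne_zero hsne, natTrailingDegree_X,
    Polynomial.natTrailingDegree_eq_zero_of_constantCoeff_ne_zero hcs]

end aux

open Polynomial Module in
theorem stmt4 {n : ℕ} (H : Matrix (Fin n ⊕ Fin n) (Fin n ⊕ Fin n) ℝ)
    (hHam : (Jre n * H)ᵀ = Jre n * H)
    (Hc : Matrix (Fin n ⊕ Fin n) (Fin n ⊕ Fin n) ℂ)
    (hHc : Hc = H.map ((↑) : ℝ → ℂ))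
    (lam : ℂ) (hlam : lam ≠ 0)
    (hsimple : (Matrix.charpoly Hc).rootMultiplicity lam = 1)
    (vp vm : (Fin n ⊕ Fin n) → ℂ) (hvp : vp ≠ 0) (hvm : vm ≠ 0)
    (heigp : Hc *ᵥ vp = lam • vp) (heigm : Hc *ᵥ vm = (-lam) • vm) :
    vm ⬝ᵥ (JC n *ᵥ vp) ≠ 0 := by
  classical
  intro hcontra
  -- complexified Hamiltonian relation : Hcᵀ * JC n = -(JC n * Hc)
  have hHamC : Hcᵀ * JC n = -(JC n * Hc) := by
    have h1 : Hᵀ * Jre n = -(Jre n * H) := by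
      have := hHam
      rw [Matrix.transpose_mul, aux_Jre_transpose] at this
      -- this : Hᵀ * -(Jre n) = Jre n * H
      rw [Matrix.mul_neg] at this
      exact neg_eq_iff_eq_neg.mp this
    have h2 := congrArg (fun M => (Complex.ofRealHom : ℝ →+* ℂ).mapMatrix M) h1
    simp only [_root_.map_mul, _root_.map_neg] at h2
    have hT : ((Complex.ofRealHom : ℝ →+* ℂ).mapMatrix H)ᵀ
        = (Complex.ofRealHom : ℝ →+* ℂ).mapMatrix (Hᵀ) := by
      simp [RingHom.mapMatrix_apply, Matrix.transpose_map]
    rw [hHc]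
    show ((Complex.ofRealHom : ℝ →+* ℂ).mapMatrix H)ᵀ * JC n
        = -(JC n * (Complex.ofRealHom : ℝ →+* ℂ).mapMatrix H)
    rw [hT, aux_JC_eq]
    exact h2
  -- the left eigenvector u
  set u : (Fin n ⊕ Fin n) → ℂ := JC n *ᵥ vm with hu
  have hu_eig : Hcᵀ *ᵥ u = lam • u := by
    rw [hu, Matrix.mulVec_mulVec, hHamC, Matrix.neg_mulVec, ← Matrix.mulVec_mulVec, heigm,
      Matrix.mulVec_smul]
    simp
  have hJCu : JC n *ᵥ u = -vm := by
    rw [hu, Matrix.mulVec_mulVec, aux_JC_mul_JC, Matrix.neg_mulVec, Matrix.one_mulVec]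
  have hune : u ≠ 0 := by
    intro h
    apply hvm
    rw [h, Matrix.mulVec_zero] at hJCu
    simpa using congrArg Neg.neg hJCu.symm
  have hupvp : u ⬝ᵥ vp = 0 := by
    rw [hu, dotProduct_comm, Matrix.dotProduct_mulVec, ← Matrix.mulVec_transpose,
      aux_JC_transpose, Matrix.neg_mulVec, neg_dotProduct,
      dotProduct_comm (JC n *ᵥ vp) vm, hcontra, neg_zero]
  -- the shifted matrix and endomorphism
  set A : Matrix (Fin n ⊕ Fin n) (Fin n ⊕ Fin n) ℂ := Hc - lam • 1 with hA
  set ψ : Module.End ℂ ((Fin n ⊕ Fin n) → ℂ) := Matrix.toLin' A with hψdef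
  have hψ : ∀ x, ψ x = A *ᵥ x := fun x => Matrix.toLin'_apply A x
  have hAeval : ∀ x : ℂ, (Matrix.charpoly A).eval x = (Matrix.charpoly Hc).eval (x + lam) := by
    intro x
    rw [aux_eval_charpoly, aux_eval_charpoly]
    congr 1
    rw [hA, add_smul]
    abel
  have hp0 : Matrix.charpoly Hc ≠ 0 := (Matrix.charpoly_monic Hc).ne_zero
  have htd : (Matrix.charpoly A).natTrailingDegree = 1 :=
    aux_natTrailingDegree _ lam hp0 hsimple A hAeval
  have hcharψ : ψ.charpoly = Matrix.charpoly A := by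
    rw [hψdef, ← LinearMap.charpoly_toMatrix (Matrix.toLin' A) (Pi.basisFun ℂ _),
      LinearMap.toMatrix_eq_toMatrix', LinearMap.toMatrix'_toLin']
  have hfinG : finrank ℂ (ψ.maxGenEigenspace 0) = 1 := by
    rw [LinearMap.finrank_maxGenEigenspace_zero_eq, hcharψ, htd]
  have hmem : ∀ x, x ∈ ψ.maxGenEigenspace 0 ↔ ∃ k : ℕ, (ψ ^ k) x = 0 := by
    intro x
    rw [Module.End.mem_maxGenEigenspace]
    simp
  have hψvp : ψ vp = 0 := by
    rw [hψ, hA, Matrix.sub_mulVec, heigp, Matrix.smul_mulVec, Matrix.one_mulVec, sub_self]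
  have hKG : LinearMap.ker ψ ≤ ψ.maxGenEigenspace 0 := fun x hx =>
    (hmem x).mpr ⟨1, by simpa using LinearMap.mem_ker.mp hx⟩
  have hvpK : vp ∈ LinearMap.ker ψ := LinearMap.mem_ker.mpr hψvp
  have hspanK : Submodule.span ℂ {vp} ≤ LinearMap.ker ψ := by
    rwa [Submodule.span_singleton_le_iff_mem]
  have h1K : 1 ≤ finrank ℂ (LinearMap.ker ψ) := by
    rw [← finrank_span_singleton (K := ℂ) hvp]
    exact Submodule.finrank_mono hspanK
  have hKeqG : LinearMap.ker ψ = ψ.maxGenEigenspace 0 :=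
    Submodule.eq_of_le_of_finrank_le hKG (by rw [hfinG]; exact h1K)
  have hfinK : finrank ℂ (LinearMap.ker ψ) = 1 := by rw [hKeqG, hfinG]
  have hspaneq : Submodule.span ℂ {vp} = LinearMap.ker ψ :=
    Submodule.eq_of_le_of_finrank_le hspanK
      (by rw [hfinK, finrank_span_singleton (K := ℂ) hvp])
  have hinf : LinearMap.ker ψ ⊓ LinearMap.range ψ = ⊥ := by
    rw [eq_bot_iff]
    rintro x ⟨hxk, y, rfl⟩
    have hy : y ∈ ψ.maxGenEigenspace 0 := (hmem y).mpr ⟨2, by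
      rw [pow_two, Module.End.mul_apply]
      exact LinearMap.mem_ker.mp hxk⟩
    rw [← hKeqG] at hy
    simp [LinearMap.mem_ker.mp hy]
  have htop : LinearMap.ker ψ ⊔ LinearMap.range ψ = ⊤ := by
    apply Submodule.eq_top_of_finrank_eq
    have hsum := Submodule.finrank_sup_add_finrank_inf_eq (LinearMap.ker ψ) (LinearMap.range ψ)
    rw [hinf, finrank_bot, add_zero] at hsum
    rw [hsum, add_comm]
    exact LinearMap.finrank_range_add_finrank_ker ψ
  have hudot : ∀ y, u ⬝ᵥ y = 0 := by
    intro y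
    have hy : y ∈ LinearMap.ker ψ ⊔ LinearMap.range ψ := by rw [htop]; trivial
    obtain ⟨a, ha, b, hb, rfl⟩ := Submodule.mem_sup.mp hy
    have ha' : u ⬝ᵥ a = 0 := by
      rw [← hspaneq] at ha
      obtain ⟨c, rfl⟩ := Submodule.mem_span_singleton.mp ha
      rw [dotProduct_smul, hupvp, smul_zero]
    have hb' : u ⬝ᵥ b = 0 := by
      obtain ⟨z, rfl⟩ := hb
      rw [hψ, Matrix.dotProduct_mulVec]
      have hvA : u ᵥ* A = 0 := by
        rw [← Matrix.mulVec_transpose, hA, Matrix.transpose_sub, Matrix.transpose_smul,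
          Matrix.transpose_one, Matrix.sub_mulVec, hu_eig, Matrix.smul_mulVec,
          Matrix.one_mulVec, sub_self]
      rw [hvA, zero_dotProduct]
    rw [dotProduct_add, ha', hb', add_zero]
  apply hune
  funext i
  have hi := hudot (Pi.single i 1)
  simpa using hi
end
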